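/- arXiv:2312.14896 — 4 statements merged into one kernel-verified Lean document; each statement's English description precedes it below -/
import Mathlib

section
/- For any constants a₂, b₁ > 0 and c₁ ∈ ℝ, the equation 4·a₂·b₁·x = c₁·φ(x) has exactly one real solution x, where φ is the standard sigmoid. -/
/-!
Dividing by `φ x > 0`, the equation becomes `x / φ x = c₁ / (4 a₂ b₁)`. The map
`x ↦ x / φ x = x (1 + e⁻ˣ)` is continuous, has derivative `1 + (1 - x) e⁻ˣ > 0` (as `eˣ ≥ 1 + x`)
and tends to `±∞` at `±∞`, so it is a bijection of `ℝ`.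
-/

noncomputable def phi (z : ℝ) : ℝ := 1 / (1 + Real.exp (-z))

open Real Filter

lemma phi_pos (x : ℝ) : 0 < phi x := by
  unfold phi; positivity

lemma div_phi (x : ℝ) : x / phi x = x * (1 + exp (-x)) := by
  rw [phi, one_div, div_inv_eq_mul]

lemma hasDerivAt_div_phi (x : ℝ) :
    HasDerivAt (fun t => t / phi t) (1 + (1 - x) * exp (-x)) x := by
  have h : HasDerivAt (fun t => t * (1 + exp (-t))) (1 * (1 + exp (-x)) + x * (exp (-x) * -1)) x :=
    (hasDerivAt_id' x).mul ((hasDerivAt_neg x).exp.const_add 1)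
  simp only [div_phi]
  convert h using 1
  ring

lemma one_add_one_sub_mul_exp_neg_pos (x : ℝ) : 0 < 1 + (1 - x) * exp (-x) := by
  have h : 1 + (1 - x) * exp (-x) = exp (-x) * (exp x - x + 1) := by
    rw [exp_neg]; field_simp; ring
  rw [h]
  have := add_one_le_exp x
  exact mul_pos (exp_pos _) (by linarith)

lemma strictMono_div_phi : StrictMono fun x => x / phi x :=
  strictMono_of_hasDerivAt_pos hasDerivAt_div_phi one_add_one_sub_mul_exp_neg_pos

lemma continuous_div_phi : Continuous fun x => x / phi x :=
  continuous_iff_continuousAt.2 fun x => (hasDerivAt_div_phi x).continuousAt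

lemma tendsto_div_phi_atTop : Tendsto (fun x => x / phi x) atTop atTop := by
  refine tendsto_atTop_mono' atTop ?_ tendsto_id
  filter_upwards [eventually_ge_atTop 0] with x hx
  rw [div_phi, id]
  nlinarith [exp_pos (-x)]

lemma tendsto_div_phi_atBot : Tendsto (fun x => x / phi x) atBot atBot := by
  refine tendsto_atBot_mono' atBot ?_ tendsto_id
  filter_upwards [eventually_le_atBot 0] with x hx
  rw [div_phi, id]
  nlinarith [exp_pos (-x)]

lemma bijective_div_phi : Function.Bijective fun x => x / phi x :=
  ⟨strictMono_div_phi.injective,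
    continuous_div_phi.surjective tendsto_div_phi_atTop tendsto_div_phi_atBot⟩

/-- For a₂, b₁ > 0 and any c₁ ∈ ℝ, the equation 4·a₂·b₁·x = c₁·φ(x) has exactly
one real solution. -/
theorem unique_solution_one_synapse (a₂ b₁ c₁ : ℝ) (ha₂ : 0 < a₂) (hb₁ : 0 < b₁) :
    ∃! x : ℝ, 4 * a₂ * b₁ * x = c₁ * phi x := by
  have hk : 4 * a₂ * b₁ ≠ 0 := by positivity
  refine (existsUnique_congr fun x => ?_).1 (bijective_div_phi.existsUnique (c₁ / (4 * a₂ * b₁)))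
  rw [div_eq_div_iff (phi_pos x).ne' hk, mul_comm x]
end

section
/- For every real constant c, the equation x = c·φ(x)³ has exactly one real solution, where φ is the standard sigmoid. -/
open Real Filter

lemma three_mul_sub_one_lt_exp (x : ℝ) : 3 * x - 1 < exp x := by
  rcases le_or_gt x (1 / 3) with hx | hx
  · linarith [exp_pos x]
  -- the tangent line of `exp` at `4/3` has slope `exp (4/3) > 3` and vanishes at `1/3`
  have tangent : exp (4 / 3) * (x - 1 / 3) ≤ exp x := by
    have := add_one_le_exp (x - 4 / 3)
    calc exp (4 / 3) * (x - 1 / 3) = exp (4 / 3) * (x - 4 / 3 + 1) := by ring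
      _ ≤ exp (4 / 3) * exp (x - 4 / 3) := by gcongr
      _ = exp x := by rw [← exp_add]; ring_nf
  have slope : (3 : ℝ) < exp (4 / 3) := by
    linarith [quadratic_le_exp_of_nonneg (x := 4 / 3) (by norm_num)]
  nlinarith

lemma div_phi_pow_three_eq (x : ℝ) : x / phi x ^ 3 = x * (1 + exp (-x)) ^ 3 := by
  simp only [phi, one_div, inv_pow, div_inv_eq_mul]

lemma hasDerivAt_mul_one_add_exp_neg_pow_three (x : ℝ) :
    HasDerivAt (fun y => y * (1 + exp (-y)) ^ 3)
      ((1 + exp (-x)) ^ 2 * (1 + exp (-x) - 3 * x * exp (-x))) x := by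
  have hexp : HasDerivAt (fun y => 1 + exp (-y)) (-exp (-x)) x := by
    simpa using ((hasDerivAt_neg x).exp).const_add 1
  refine ((hasDerivAt_id' x).fun_mul (hexp.fun_pow 3)).congr_deriv ?_
  push_cast
  ring

lemma strictMono_div_phi_pow_three : StrictMono fun x => x / phi x ^ 3 := by
  simp only [div_phi_pow_three_eq]
  refine strictMono_of_hasDerivAt_pos hasDerivAt_mul_one_add_exp_neg_pow_three fun x => ?_
  have hu : 0 < exp (-x) := exp_pos _
  have key : exp (-x) * (3 * x - 1) < 1 := by
    calc exp (-x) * (3 * x - 1) < exp (-x) * exp x :=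
          mul_lt_mul_of_pos_left (three_mul_sub_one_lt_exp x) hu
      _ = 1 := by rw [← exp_add, neg_add_cancel, exp_zero]
  have : 0 < 1 + exp (-x) - 3 * x * exp (-x) := by linarith
  positivity

lemma surjective_div_phi_pow_three : Function.Surjective fun x => x / phi x ^ 3 := by
  have one_le (x : ℝ) : 1 ≤ (1 + exp (-x)) ^ 3 := one_le_pow₀ (by linarith [exp_pos (-x)])
  simp only [div_phi_pow_three_eq]
  refine Continuous.surjective (by fun_prop) ?_ ?_
  · refine tendsto_atTop_mono' atTop ?_ tendsto_id
    filter_upwards [eventually_ge_atTop 0] with x hx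
    exact le_mul_of_one_le_right hx (one_le x)
  · refine tendsto_atBot_mono' atBot ?_ tendsto_id
    filter_upwards [eventually_le_atBot 0] with x hx
    exact mul_le_of_one_le_right hx (one_le x)

/-- For every real c, the equation x = c·φ(x)³ has exactly one real solution. -/
theorem unique_solution_cubed (c : ℝ) : ∃! x : ℝ, x = c * (phi x) ^ 3 := by
  have hbij : Function.Bijective fun x => x / phi x ^ 3 :=
    ⟨strictMono_div_phi_pow_three.injective, surjective_div_phi_pow_three⟩
  simpa only [div_eq_iff (pow_ne_zero 3 (phi_pos _).ne')] using hbij.existsUnique c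
end

section
/- For the 3×3 matrix J̃ with rows (-a₁, 0, 0), (x̃/2, -a₂, 1/2), (c₁φ̃/4, c₁φ̃'/2, -b₁), where φ̃ = φ(x̃), φ̃' = φ̃(1-φ̃), and 4a₂b₁x̃ = c₁φ̃, one has det(J̃) = -a₁a₂b₁[1 - x̃(1-φ̃)] and this determinant is strictly negative (since x̃(1-φ̃) < 1 for all real x̃). -/
/-!
Expanding along the first row, det J̃ = -a₁ (a₂ b₁ - c₁ φ̃'/4), and the equilibrium
equation c₁ φ̃ = 4 a₂ b₁ x̃ turns c₁ φ̃' / 4 into a₂ b₁ x̃ (1 - φ̃). For the sign,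
1 - φ(x) = 1 / (1 + eˣ), so x (1 - φ(x)) < 1 is the inequality x < 1 + eˣ.
-/

open Real

lemma one_sub_phi (x : ℝ) : 1 - phi x = 1 / (1 + exp x) := by
  have hexp : exp x * exp (-x) = 1 := by rw [← exp_add, add_neg_cancel, exp_zero]
  unfold phi
  field_simp
  linear_combination hexp

lemma mul_one_sub_phi_lt_one (x : ℝ) : x * (1 - phi x) < 1 := by
  rw [one_sub_phi, mul_one_div, div_lt_one (by positivity)]
  linarith [add_one_le_exp x]

lemma det_jacobian_of_equilibrium {a₁ a₂ b₁ c₁ x p : ℝ}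
    (hx : 4 * a₂ * b₁ * x = c₁ * p) :
    Matrix.det !![-a₁, 0, 0;
                  x / 2, -a₂, 1 / 2;
                  c₁ * p / 4, c₁ * (p * (1 - p)) / 2, -b₁]
        = -(a₁ * a₂ * b₁) * (1 - x * (1 - p)) := by
  rw [Matrix.det_fin_three]
  simp only [Matrix.of_apply, Matrix.cons_val', Matrix.cons_val_zero, Matrix.cons_val_one,
    Matrix.cons_val_two, Matrix.empty_val', Matrix.cons_val_fin_one, Matrix.head_cons,
    Matrix.tail_cons, Matrix.head_fin_const]
  linear_combination (-(a₁ * (1 - p)) / 4) * hx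

theorem one_synapse_jacobian_det_general (a₁ a₂ b₁ c₁ xt : ℝ)
    (ha₁ : 0 < a₁) (ha₂ : 0 < a₂) (hb₁ : 0 < b₁)
    (hx : 4 * a₂ * b₁ * xt = c₁ * phi xt) :
    Matrix.det !![-a₁, 0, 0;
                  xt / 2, -a₂, 1 / 2;
                  c₁ * phi xt / 4, c₁ * (phi xt * (1 - phi xt)) / 2, -b₁]
        = -(a₁ * a₂ * b₁) * (1 - xt * (1 - phi xt)) ∧
    Matrix.det !![-a₁, 0, 0;
                  xt / 2, -a₂, 1 / 2;
                  c₁ * phi xt / 4, c₁ * (phi xt * (1 - phi xt)) / 2, -b₁] < 0 := by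
  have hdet := det_jacobian_of_equilibrium (a₁ := a₁) hx
  refine ⟨hdet, hdet ▸ mul_neg_of_neg_of_pos ?_ ?_⟩
  · exact neg_neg_of_pos (by positivity)
  · exact sub_pos.mpr (mul_one_sub_phi_lt_one xt)

/-- Determinant of the Jacobian of the one-synapse minimal RNN-HL model at its
unique equilibrium: det(J̃) = -a₁a₂b₁[1 - x̃(1-φ̃)] < 0. -/
theorem one_synapse_jacobian_det (a₁ a₂ b₁ c₁ xt : ℝ)
    (ha₁ : 0 < a₁) (ha₂ : 0 < a₂) (hb₁ : 0 < b₁) (hc₁ : c₁ ≠ 0)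
    (hx : 4 * a₂ * b₁ * xt = c₁ * phi xt) :
    Matrix.det !![-a₁, 0, 0;
                  xt / 2, -a₂, 1 / 2;
                  c₁ * phi xt / 4, c₁ * (phi xt * (1 - phi xt)) / 2, -b₁]
        = -(a₁ * a₂ * b₁) * (1 - xt * (1 - phi xt)) ∧
    Matrix.det !![-a₁, 0, 0;
                  xt / 2, -a₂, 1 / 2;
                  c₁ * phi xt / 4, c₁ * (phi xt * (1 - phi xt)) / 2, -b₁] < 0 :=
  one_synapse_jacobian_det_general a₁ a₂ b₁ c₁ xt ha₁ ha₂ hb₁ hx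
end

section
/- Along solutions of ẋ₁ = -x₁ + wφ(x₂), ẋ₂ = -x₂ + wφ(x₁), ẇ = -w + cφ(x₁)φ(x₂) with c > -16, confined to the region where |w| ≤ |c| and (when c < 0) x₁, x₂ ≤ 0, the function V(x₁,x₂,w) = (x₁-x₂)²/2 satisfies dV/dt = -(x₁-x₂)²·(1 + w·(φ(x₁)-φ(x₂))/(x₁-x₂)) ≤ 0, with equality if and only if x₁ = x₂. -/
/-!
The derivative of `(x₁ - x₂)² / 2` is `(x₁ - x₂)(-(x₁ - x₂) - w (φ x₁ - φ x₂))`, which factors as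
`-(x₁ - x₂)² (1 + w s)` with `s` the difference quotient of `φ` between `x₁` and `x₂`. By the mean
value theorem `s = φ'(ξ) = φ(ξ)(1 - φ(ξ)) ∈ (0, 1/4]`, so `1 + w s > 0` as soon as `w > -4`; on the
invariant region this holds because `w ≥ 0` when `c ≥ 0` and `w ≥ c/4 > -4` when `c < 0`.
-/

open Set Real

lemma phi_eq_sigmoid : phi = sigmoid :=
  funext fun z => by rw [phi, sigmoid_def, one_div]

lemma sigmoid_slope_mem_Ioc {a b : ℝ} (hab : a ≠ b) :
    (sigmoid a - sigmoid b) / (a - b) ∈ Ioc 0 (1 / 4) := by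
  wlog hlt : a < b generalizing a b
  · rw [← neg_sub b a, ← neg_sub (sigmoid b), neg_div_neg_eq]
    exact this hab.symm (lt_of_le_of_ne (not_lt.mp hlt) hab.symm)
  obtain ⟨ξ, -, hξ⟩ := exists_hasDerivAt_eq_slope sigmoid (fun x => sigmoid x * (1 - sigmoid x))
    hlt continuous_sigmoid.continuousOn fun x _ => hasDerivAt_sigmoid x
  rw [← neg_sub b a, ← neg_sub (sigmoid b), neg_div_neg_eq, ← hξ]
  have h0 := sigmoid_pos ξ
  have h1 := sigmoid_lt_one ξ
  exact ⟨mul_pos h0 (sub_pos.mpr h1), by nlinarith [sq_nonneg (2 * sigmoid ξ - 1)]⟩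

lemma one_add_mul_pos_of_mem_Ioc {w s : ℝ} (hw : -4 < w) (hs : s ∈ Ioc 0 (1 / 4)) :
    0 < 1 + w * s := by
  obtain ⟨hs0, hs1⟩ := hs
  rcases le_or_gt 0 w with hw0 | hw0
  · positivity
  · nlinarith

lemma HasDerivAt.half_sq_sub {f g : ℝ → ℝ} {f' g' t : ℝ} (hf : HasDerivAt f f' t)
    (hg : HasDerivAt g g' t) :
    HasDerivAt (fun τ => (f τ - g τ) ^ 2 / 2) ((f t - g t) * (f' - g')) t :=
  ((hf.sub hg).pow 2).div_const 2 |>.congr_deriv <| by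
    simp only [Pi.sub_apply, Nat.cast_ofNat]
    ring

lemma sq_mul_div_self (u x : ℝ) : u ^ 2 * (x / u) = u * x := by
  rcases eq_or_ne u 0 with rfl | hu
  · simp
  · field_simp

lemma neg_sq_mul_nonpos_and_eq_zero_iff {u k : ℝ} (hk : u ≠ 0 → 0 < k) :
    -u ^ 2 * k ≤ 0 ∧ (-u ^ 2 * k = 0 ↔ u = 0) := by
  rcases eq_or_ne u 0 with rfl | hu
  · simp
  · have hlt : -u ^ 2 * k < 0 := mul_neg_of_neg_of_pos (neg_neg_of_pos (by positivity)) (hk hu)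
    exact ⟨hlt.le, iff_of_false hlt.ne hu⟩

theorem lyapunov_decrease_general (c : ℝ) (hc : -16 < c) (x₁ x₂ w : ℝ → ℝ)
    (h₁ : ∀ t, HasDerivAt x₁ (-(x₁ t) + w t * phi (x₂ t)) t)
    (h₂ : ∀ t, HasDerivAt x₂ (-(x₂ t) + w t * phi (x₁ t)) t)
    (t : ℝ)
    (hneg : c < 0 → x₁ t ≤ 0 ∧ x₂ t ≤ 0 ∧ c / 4 ≤ w t)
    (hpos : 0 ≤ c → 0 ≤ w t) :
    ∃ D : ℝ, HasDerivAt (fun τ => (x₁ τ - x₂ τ) ^ 2 / 2) D t ∧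
      (x₁ t ≠ x₂ t →
        D = -(x₁ t - x₂ t) ^ 2 *
              (1 + w t * (phi (x₁ t) - phi (x₂ t)) / (x₁ t - x₂ t))) ∧
      D ≤ 0 ∧ (D = 0 ↔ x₁ t = x₂ t) := by
  have hw : -4 < w t := by
    rcases lt_or_ge c 0 with hc0 | hc0
    · linarith [(hneg hc0).2.2]
    · linarith [hpos hc0]
  have hfactor : x₁ t - x₂ t ≠ 0 →
      0 < 1 + w t * (phi (x₁ t) - phi (x₂ t)) / (x₁ t - x₂ t) := fun hne => by
    rw [mul_div_assoc, phi_eq_sigmoid]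
    exact one_add_mul_pos_of_mem_Ioc hw (sigmoid_slope_mem_Ioc (sub_ne_zero.mp hne))
  -- The factored expression is also the derivative at `x₁ t = x₂ t`, where it is `0` (`x / 0 = 0`).
  refine ⟨_, ?_, fun _ => rfl, ?_⟩
  · refine ((h₁ t).half_sq_sub (h₂ t)).congr_deriv ?_
    linear_combination sq_mul_div_self (x₁ t - x₂ t) (w t * (phi (x₁ t) - phi (x₂ t)))
  · exact (neg_sq_mul_nonpos_and_eq_zero_iff hfactor).imp_right (·.trans sub_eq_zero)

/-- Along solutions of the reduced symmetric system with c > -16, confined to the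
region where |w| ≤ |c| (with w ≥ c/4 and x₁, x₂ ≤ 0 when c < 0, and w ≥ 0 when
c ≥ 0), the Lyapunov function V = (x₁-x₂)²/2 has derivative
dV/dt = -(x₁-x₂)²(1 + w(φ(x₁)-φ(x₂))/(x₁-x₂)) ≤ 0, with equality iff x₁ = x₂. -/
theorem lyapunov_decrease (c : ℝ) (hc : -16 < c) (x₁ x₂ w : ℝ → ℝ)
    (h₁ : ∀ t, HasDerivAt x₁ (-(x₁ t) + w t * phi (x₂ t)) t)
    (h₂ : ∀ t, HasDerivAt x₂ (-(x₂ t) + w t * phi (x₁ t)) t)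
    (h₃ : ∀ t, HasDerivAt w (-(w t) + c * phi (x₁ t) * phi (x₂ t)) t)
    (t : ℝ) (hw : |w t| ≤ |c|)
    (hneg : c < 0 → x₁ t ≤ 0 ∧ x₂ t ≤ 0 ∧ c / 4 ≤ w t)
    (hpos : 0 ≤ c → 0 ≤ w t) :
    ∃ D : ℝ, HasDerivAt (fun τ => (x₁ τ - x₂ τ) ^ 2 / 2) D t ∧
      (x₁ t ≠ x₂ t →
        D = -(x₁ t - x₂ t) ^ 2 *
              (1 + w t * (phi (x₁ t) - phi (x₂ t)) / (x₁ t - x₂ t))) ∧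
      D ≤ 0 ∧ (D = 0 ↔ x₁ t = x₂ t) :=
  lyapunov_decrease_general c hc x₁ x₂ w h₁ h₂ t hneg hpos
end
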